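/- arXiv:2106.13735 — 2 statements merged into one kernel-verified Lean document; each statement's English description precedes it below -/
import Mathlib

section
/- Let p > 3 be a prime and let A be an 𝔽_p-brace which is not right nilpotent whose multiplicative group (A,∘) is the group XV, with generators P, Q, R, S ∈ A satisfying the XV relations. Then for every a ∈ A^4 there is an integer α with 0 ≤ α < p such that a*Q = P^α, where P^α denotes the α-fold product P∘⋯∘P in the group (A,∘). -/
/-!
For a left brace `A` whose multiplicative group is a `p`-group and whose additive group is an
`𝔽ₚ`-space, `(A, ∘)` acts linearly through `λ` on every `λ`-invariant subspace `W ≠ 0`, so it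
fixes a nonzero functional on `W`; its kernel is a proper subspace containing every
`a * w = λ_a w - w`. Hence the left series strictly decreases until it vanishes, and `A⁵ = 0`
when `|A| = p⁴`. An element `a ∈ A⁴` is then fixed by every `λ_x`, which gives
`a * b = a ∘ b ∘ a⁻¹ - b`.

In XV, `Q = [R, S]` and `P = [Q, S]`, where `[g, h] = g⁻¹ ∘ h⁻¹ ∘ g ∘ h`. Since
`[g, h] * Aⁿ ⊆ Aⁿ⁺²`, and `[g, h] ∈ Aⁿ` once `g * h, h * g ∈ Aⁿ`, we get `Q ∈ A²`, `P ∈ A³` and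
`Q * P ∈ A⁵ = 0`. As `P` is central and `Q` is central modulo `⟨P⟩`, `a ∘ Q ∘ a⁻¹ = Q ∘ P^α`, so
`a * Q = Q ∘ P^α - Q = λ_Q (P^α) = P^α`.
-/

/-- A left brace: `(A, +)` an abelian group, `(A, *)` a group (we write the brace
multiplication `∘` as `*`), with `a * (b + c) + a = a * b + a * c`. -/
class LeftBrace (A : Type*) extends Group A, AddCommGroup A where
  mul_add_eq : ∀ a b c : A, a * (b + c) + a = a * b + a * c

namespace LeftBrace

/-- The star operation `a * b = a∘b - a - b` of a left brace. -/
def star {A : Type*} [LeftBrace A] (a b : A) : A := a * b - a - b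

end LeftBrace

/-- An `𝔽ₚ`-brace: a left brace whose additive group is a `ZMod p`-vector space
with `a * (α • b) = α • (a * b)`. -/
class FpBrace (p : ℕ) (A : Type*) extends LeftBrace A, Module (ZMod p) A where
  star_smul' : ∀ (α : ZMod p) (a b : A),
    LeftBrace.star a (α • b) = α • LeftBrace.star a b

/-- The left chain `A^1 = A`, `A^{i+1} = A * A^i` (additive subgroup generated by
`a * b`, `a ∈ A`, `b ∈ A^i`). -/
def lpow (A : Type*) [LeftBrace A] : ℕ → AddSubgroup A
  | 0 => ⊤
  | 1 => ⊤
  | (n+2) => AddSubgroup.closure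
      {x : A | ∃ a : A, ∃ b ∈ lpow A (n+1), x = LeftBrace.star a b}

/-- The right chain `A^{(1)} = A`, `A^{(i+1)} = A^{(i)} * A`. -/
def rpow (A : Type*) [LeftBrace A] : ℕ → AddSubgroup A
  | 0 => ⊤
  | 1 => ⊤
  | (n+2) => AddSubgroup.closure
      {x : A | ∃ a ∈ rpow A (n+1), ∃ b : A, x = LeftBrace.star a b}

/-- A left brace is right nilpotent if `A^{(n)} = 0` for some `n`. -/
def IsRightNilpotent (A : Type*) [LeftBrace A] : Prop := ∃ n, rpow A n = ⊥

/-- The defining relations of the group XV on generators `P, Q, R, S`. -/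
def XVRelations {A : Type*} [LeftBrace A] (p : ℕ) (P Q R S : A) : Prop :=
  Q * S = S * Q * P ∧ Q * R = R * Q ∧ P * S = S * P ∧ P * Q = Q * P ∧
  P * R = R * P ∧ R * S = S * R * Q ∧
  P ^ p = 1 ∧ Q ^ p = 1 ∧ R ^ p = 1 ∧ S ^ p = 1

/-- The multiplicative group of the brace `A` is the group XV, with generators
`P, Q, R, S` satisfying the XV relations. -/
def IsXVBrace (p : ℕ) (A : Type*) [LeftBrace A] (P Q R S : A) : Prop :=
  Nat.card A = p ^ 4 ∧ Subgroup.closure {P, Q, R, S} = ⊤ ∧ XVRelations p P Q R S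


/-- The Multiplicative Table with parameters `y, i, k`. -/
def MultTable {p : ℕ} {A : Type*} [LeftBrace A] [Module (ZMod p) A]
    (P Q R S : A) (y i k : ZMod p) : Prop :=
  LeftBrace.star P P = 0 ∧ LeftBrace.star P Q = 0 ∧
  LeftBrace.star P R = y • S ∧ LeftBrace.star P S = 0 ∧
  LeftBrace.star Q P = 0 ∧ LeftBrace.star Q Q = -(y • S) ∧
  LeftBrace.star Q R = ((2 : ZMod p)⁻¹ * y) • S ∧ LeftBrace.star Q S = 0 ∧
  LeftBrace.star R P = y • S ∧ LeftBrace.star R Q = ((2 : ZMod p)⁻¹ * y) • S ∧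
  LeftBrace.star R R = i • P + k • S ∧ LeftBrace.star R S = 0 ∧
  LeftBrace.star S P = 0 ∧ LeftBrace.star S Q = -P ∧
  LeftBrace.star S R = -Q + P - ((2 : ZMod p)⁻¹ * y) • S ∧ LeftBrace.star S S = 0

/-- Additive subgroup generated by all `x * y`, `x ∈ X`, `y ∈ Y`. -/
def starSpan {A : Type*} [LeftBrace A] (X Y : AddSubgroup A) : AddSubgroup A :=
  AddSubgroup.closure {z : A | ∃ x ∈ X, ∃ y ∈ Y, z = LeftBrace.star x y}

/-- An ideal of a left brace: an additive subgroup closed under all `λ_a` and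
normal in `(A, ∘)`. -/
def IsBraceIdeal {A : Type*} [LeftBrace A] (I : AddSubgroup A) : Prop :=
  (∀ a : A, ∀ b ∈ I, a * b - a ∈ I) ∧ (∀ a : A, ∀ b ∈ I, a * b * a⁻¹ ∈ I)

/-- A brace is prime if the product of any two nonzero ideals is nonzero. -/
def IsPrimeBrace (A : Type*) [LeftBrace A] : Prop :=
  ∀ I J : AddSubgroup A, IsBraceIdeal I → IsBraceIdeal J → I ≠ ⊥ → J ≠ ⊥ →
    starSpan I J ≠ ⊥

/-- Left chain of a nonassociative algebra given by a bilinear map. -/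
def preLieL (R : Type*) [CommRing R] (V : Type*) [AddCommGroup V] [Module R V]
    (mul : V →ₗ[R] V →ₗ[R] V) : ℕ → Submodule R V
  | 0 => ⊤
  | 1 => ⊤
  | (n+2) => Submodule.span R
      {x : V | ∃ a : V, ∃ b ∈ preLieL R V mul (n+1), x = mul a b}

/-- Right chain of a nonassociative algebra given by a bilinear map. -/
def preLieR (R : Type*) [CommRing R] (V : Type*) [AddCommGroup V] [Module R V]
    (mul : V →ₗ[R] V →ₗ[R] V) : ℕ → Submodule R V
  | 0 => ⊤
  | 1 => ⊤
  | (n+2) => Submodule.span R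
      {x : V | ∃ a ∈ preLieR R V mul (n+1), ∃ b : V, x = mul a b}

/-- The defining relations of the group XIV on generators `P, Q, R, S`. -/
def XIVRelations {A : Type*} [LeftBrace A] (p : ℕ) (P Q R S : A) : Prop :=
  Q * P = P * Q ∧ Q * R = R * Q ∧ Q * S = S * Q ∧
  P * R = R * P ∧ P * S = S * P ∧ R * S = S * R * P ∧
  P ^ p = 1 ∧ Q ^ p = 1 ∧ R ^ p = 1 ∧ S ^ p = 1

theorem IsPGroup.exists_ne_zero_dual_comp_eq {p : ℕ} [Fact p.Prime] {G V : Type*} [Group G]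
    (hG : IsPGroup p G) [AddCommGroup V] [Module (ZMod p) V] [Finite V] [Nontrivial V]
    (ρ : Representation (ZMod p) G V) :
    ∃ f : Module.Dual (ZMod p) V, f ≠ 0 ∧ ∀ g, f ∘ₗ ρ g = f := by
  let _ := MulAction.compHom (Module.Dual (ZMod p) V) ρ.dual
  have : Module.Finite (ZMod p) V := Module.Finite.of_finite
  have : Finite (Module.Dual (ZMod p) V) := Module.finite_of_finite (ZMod p)
  obtain ⟨f, hf⟩ := exists_ne (0 : Module.Dual (ZMod p) V)
  have hpf : p • f = 0 := by
    rw [← Nat.cast_smul_eq_nsmul (ZMod p), ZMod.natCast_self, zero_smul]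
  have hp : p ∣ Nat.card (Module.Dual (ZMod p) V) := by
    simpa only [addOrderOf_eq_prime hpf hf] using addOrderOf_dvd_natCard f
  obtain ⟨f, hfix, hf0⟩ := hG.exists_fixed_point_of_prime_dvd_card_of_fixed_point _ hp
    (a := 0) (fun g => map_zero (ρ.dual g))
  refine ⟨f, hf0.symm, fun g => ?_⟩
  have hg : f ∘ₗ ρ g⁻¹⁻¹ = f := hfix g⁻¹
  rwa [inv_inv] at hg

theorem AddSubgroup.seq_eq_bot_of_card_eq_prime_pow {G : Type*} [AddGroup G] {p n : ℕ}
    (hp : p.Prime) (hcard : Nat.card G = p ^ n) (W : ℕ → AddSubgroup G) (hle : ∀ k, W (k + 1) ≤ W k)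
    (hlt : ∀ k, W k ≠ ⊥ → W (k + 1) < W k) : W n = ⊥ := by
  have : Finite G := Nat.finite_of_card_ne_zero (by simp [hcard, hp.ne_zero])
  suffices h : ∀ k ≤ n, Nat.card (W k) ∣ p ^ (n - k) from
    AddSubgroup.eq_bot_of_card_eq _ (Nat.dvd_one.1 (by simpa using h n le_rfl))
  intro k hk
  induction k with
  | zero => exact hcard ▸ AddSubgroup.card_addSubgroup_dvd_card (W 0)
  | succ k ih =>
    obtain ⟨j, hj, hWk⟩ := (Nat.dvd_prime_pow hp).1 (ih (by omega))
    by_cases hbot : W k = ⊥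
    · rw [le_bot_iff.1 ((hle k).trans hbot.le), AddSubgroup.card_bot]
      exact one_dvd _
    · obtain ⟨i, hi, hWk1⟩ := (Nat.dvd_prime_pow hp).1 (hWk ▸ AddSubgroup.card_dvd_of_le (hle k))
      have hij : i ≠ j := fun h => (hlt k hbot).ne <|
        AddSubgroup.eq_of_le_of_card_ge (hle k) (by rw [hWk, hWk1, h])
      rw [hWk1]
      exact pow_dvd_pow p (by omega)

section Group

variable {G : Type*} [Group G] {s : Set G}

theorem commute_of_closure_eq_top (hs : Subgroup.closure s = ⊤) {x : G}
    (hx : ∀ y ∈ s, Commute x y) (g : G) : Commute x g := by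
  have hle : Subgroup.closure s ≤ Subgroup.centralizer {x} :=
    (Subgroup.closure_le _).2 fun y hy => Subgroup.mem_centralizer_singleton_iff.2 (hx y hy).symm
  exact (Subgroup.mem_centralizer_singleton_iff.1 (hle (hs ▸ Subgroup.mem_top g))).symm

theorem exists_conj_eq_mul_zpow_of_closure_eq_top (hs : Subgroup.closure s = ⊤) {P Q : G}
    (hP : ∀ g, Commute P g) (hgen : ∀ x ∈ s, ∃ m : ℤ, x * Q * x⁻¹ = Q * P ^ m) (g : G) :
    ∃ m : ℤ, g * Q * g⁻¹ = Q * P ^ m := by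
  have hg : g ∈ Subgroup.closure s := hs ▸ Subgroup.mem_top g
  induction hg using Subgroup.closure_induction with
  | mem x hx => exact hgen x hx
  | one => exact ⟨0, by simp⟩
  | mul x y _ _ hx hy =>
    obtain ⟨m, hm⟩ := hx
    obtain ⟨k, hk⟩ := hy
    refine ⟨m + k, ?_⟩
    calc x * y * Q * (x * y)⁻¹ = x * (y * Q * y⁻¹) * x⁻¹ := by group
      _ = x * Q * (P ^ k * x⁻¹) := by rw [hk]; group
      _ = x * Q * x⁻¹ * P ^ k := by rw [((hP x⁻¹).zpow_left k).eq]; group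
      _ = Q * P ^ (m + k) := by rw [hm, zpow_add, mul_assoc]
  | inv x _ hx =>
    obtain ⟨m, hm⟩ := hx
    refine ⟨-m, ?_⟩
    rw [zpow_neg, eq_mul_inv_iff_mul_eq]
    calc x⁻¹ * Q * x⁻¹⁻¹ * P ^ m = x⁻¹ * Q * (P ^ m * x) := by
          rw [((hP x).zpow_left m).eq]; group
      _ = x⁻¹ * (x * Q * x⁻¹) * x := by rw [hm]; group
      _ = Q := by group

theorem exists_lt_pow_eq_zpow {x : G} {n : ℕ} (hn : 0 < n) (hx : x ^ n = 1) (m : ℤ) :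
    ∃ k < n, x ^ m = x ^ k := by
  have h0 : 0 ≤ m % n := Int.emod_nonneg m (by omega)
  have hlt : m % n < n := Int.emod_lt_of_pos m (by omega)
  refine ⟨(m % n).toNat, by omega, ?_⟩
  rw [zpow_eq_zpow_emod' m hx, ← zpow_natCast, Int.toNat_of_nonneg h0]

end Group

namespace LeftBrace

variable {A : Type*} [LeftBrace A]

theorem one_eq_zero : (1 : A) = 0 := by
  simpa using mul_add_eq (1 : A) 0 0

def lam (a b : A) : A := a * b - a

theorem lam_add (a b c : A) : lam a (b + c) = lam a b + lam a c := by
  have h : a * (b + c) = a * b + a * c - a := by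
    rw [← mul_add_eq a b c]; abel
  simp only [lam, h]; abel

def lamHom (a : A) : A →+ A := AddMonoidHom.mk' (lam a) (lam_add a)

theorem lam_zero (a : A) : lam a 0 = 0 := (lamHom a).map_zero

theorem lam_neg (a b : A) : lam a (-b) = -lam a b := (lamHom a).map_neg b

theorem lam_sub (a b c : A) : lam a (b - c) = lam a b - lam a c := (lamHom a).map_sub b c

theorem lam_one (b : A) : lam 1 b = b := by
  rw [lam, one_mul, one_eq_zero, sub_zero]

theorem lam_mul (a b c : A) : lam (a * b) c = lam a (lam b c) := by
  change _ = lam a (b * c - b)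
  rw [lam_sub]
  simp only [lam, mul_assoc]; abel

theorem lam_inv_lam (a b : A) : lam a⁻¹ (lam a b) = b := by
  rw [← lam_mul, inv_mul_cancel, lam_one]

theorem mul_eq_add_lam (a b : A) : a * b = a + lam a b := by
  rw [lam]; abel

theorem star_eq_lam_sub (a b : A) : star a b = lam a b - b := rfl

theorem lam_eq_star_add (a b : A) : lam a b = star a b + b := by
  rw [star_eq_lam_sub]; abel

theorem lam_eq_self_of_star_eq_zero {a b : A} (h : star a b = 0) : lam a b = b := by
  rw [lam_eq_star_add, h, zero_add]

theorem inv_mul_eq_lam_sub (a b : A) : a⁻¹ * b = lam a⁻¹ (b - a) := by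
  rw [lam_sub, lam, lam, inv_mul_cancel, one_eq_zero]; abel

theorem lam_pow_eq_pow {a x : A} (hc : Commute a x) (hx : lam a x = x) (k : ℕ) :
    lam a (x ^ k) = x ^ k := by
  induction k with
  | zero => rw [pow_zero, one_eq_zero, lam_zero]
  | succ k ih =>
    rw [pow_succ, mul_eq_add_lam (x ^ k), lam_add, ih, ← lam_mul, (hc.pow_right k).eq,
      lam_mul, hx]

theorem inv_eq_neg_of_forall_lam_eq {a : A} (h : ∀ x, lam x a = a) : a⁻¹ = -a := by
  have ha := h a⁻¹
  rw [lam, inv_mul_cancel, one_eq_zero, zero_sub] at ha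
  exact neg_eq_iff_eq_neg.mp ha

theorem star_eq_mul_mul_inv_sub {a : A} (h : ∀ x, lam x a = a) (b : A) :
    star a b = a * b * a⁻¹ - b := by
  rw [inv_eq_neg_of_forall_lam_eq h, mul_eq_add_lam (a * b), lam_neg, h, star]; abel

theorem closure_star_lt {p : ℕ} [Fact p.Prime] [Module (ZMod p) A] [Finite A]
    (hA : IsPGroup p A) {W : AddSubgroup A} (hW : W ≠ ⊥) (hinv : ∀ a, ∀ w ∈ W, lam a w ∈ W) :
    AddSubgroup.closure {x | ∃ a, ∃ w ∈ W, x = star a w} < W := by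
  let V := AddSubgroup.toZModSubmodule p W
  let ρ : Representation (ZMod p) A V :=
    { toFun a := ((lamHom a).toZModLinearMap p).restrict (hinv a)
      map_one' := by ext; exact lam_one _
      map_mul' a b := by ext; exact lam_mul a b _ }
  have : Nontrivial V := Submodule.nontrivial_iff_ne_bot.2 (by simpa [V] using hW)
  obtain ⟨f, hf0, hf⟩ := hA.exists_ne_zero_dual_comp_eq ρ
  let K := (LinearMap.ker f).map V.subtype
  have hK : K < V := by
    simpa only [K, Submodule.map_subtype_top] using
      Submodule.map_strictMono_of_injective V.injective_subtype
        (lt_top_iff_ne_top.2 (mt LinearMap.ker_eq_top.1 hf0))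
  have hKW : K.toAddSubgroup < W := by simpa [V] using Submodule.toAddSubgroup_strictMono hK
  refine lt_of_le_of_lt ((AddSubgroup.closure_le _).2 ?_) hKW
  rintro _ ⟨a, w, hw, rfl⟩
  refine ⟨ρ a ⟨w, hw⟩ - ⟨w, hw⟩, LinearMap.mem_ker.2 ?_, rfl⟩
  rw [map_sub, ← LinearMap.comp_apply, hf, sub_self]

theorem star_mem_lpow (a : A) : ∀ {n : ℕ} {b : A}, b ∈ lpow A n → star a b ∈ lpow A (n + 1)
  | 0, _, _ => AddSubgroup.mem_top _
  | _ + 1, b, hb => AddSubgroup.subset_closure ⟨a, b, hb, rfl⟩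

theorem lpow_succ_le : ∀ n : ℕ, lpow A (n + 1) ≤ lpow A n
  | 0 | 1 => le_top
  | n + 2 => (AddSubgroup.closure_le _).2 fun _ ⟨a, _, hb, hx⟩ =>
      hx ▸ star_mem_lpow a (lpow_succ_le (n + 1) hb)

theorem lam_mem_lpow (a : A) : ∀ {n : ℕ} {b : A}, b ∈ lpow A n → lam a b ∈ lpow A n
  | 0, _, _ | 1, _, _ => AddSubgroup.mem_top _
  | n + 2, _, hb => by
    induction hb using AddSubgroup.closure_induction with
    | mem _ hx =>
      obtain ⟨c, b, hb, rfl⟩ := hx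
      have h : lam a (star c b) = star (a * c) b - star a b := by
        simp only [star_eq_lam_sub, lam_sub, lam_mul]; abel
      exact h ▸ sub_mem (star_mem_lpow _ hb) (star_mem_lpow _ hb)
    | zero => exact (lam_zero a).symm ▸ zero_mem _
    | add x y _ _ hx hy => exact (lam_add a x y).symm ▸ add_mem hx hy
    | neg x _ hx => exact (lam_neg a x).symm ▸ neg_mem hx

theorem star_commutator_mem_lpow (g h : A) {n : ℕ} {w : A} (hw : w ∈ lpow A n) :
    star (g⁻¹ * h⁻¹ * g * h) w ∈ lpow A (n + 2) := by
  have hw' : w = lam g⁻¹ (lam h⁻¹ (lam h (lam g w))) := by rw [lam_inv_lam, lam_inv_lam]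
  have hswap : lam g (lam h w) - lam h (lam g w) = star g (star h w) - star h (star g w) := by
    rw [lam_eq_star_add h w, lam_eq_star_add g w, lam_add, lam_add, lam_eq_star_add g (star h w),
      lam_eq_star_add g w, lam_eq_star_add h (star g w), lam_eq_star_add h w]
    abel
  have key : star (g⁻¹ * h⁻¹ * g * h) w
      = lam g⁻¹ (lam h⁻¹ (star g (star h w) - star h (star g w))) := by
    rw [star_eq_lam_sub, lam_mul, lam_mul, lam_mul, ← hswap, lam_sub, lam_sub, ← hw']
  rw [key]
  exact lam_mem_lpow _ (lam_mem_lpow _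
    (sub_mem (star_mem_lpow _ (star_mem_lpow _ hw)) (star_mem_lpow _ (star_mem_lpow _ hw))))

theorem commutator_mem_lpow {g h : A} {n : ℕ} (hgh : star g h ∈ lpow A n)
    (hhg : star h g ∈ lpow A n) : g⁻¹ * h⁻¹ * g * h ∈ lpow A n := by
  have key : g⁻¹ * h⁻¹ * g * h = lam (h * g)⁻¹ (star g h - star h g) := by
    rw [show g⁻¹ * h⁻¹ * g * h = (h * g)⁻¹ * (g * h) by group, inv_mul_eq_lam_sub]
    simp only [star]; congr 1; abel
  exact key ▸ lam_mem_lpow _ (sub_mem hgh hhg)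

theorem lpow_succ_eq_bot {p n : ℕ} [Fact p.Prime] [Module (ZMod p) A]
    (hcard : Nat.card A = p ^ n) : lpow A (n + 1) = ⊥ := by
  have : Finite A := Nat.finite_of_card_ne_zero (by simp [hcard, (Fact.out : p.Prime).ne_zero])
  exact AddSubgroup.seq_eq_bot_of_card_eq_prime_pow Fact.out hcard (fun k => lpow A (k + 1))
    (fun k => lpow_succ_le (k + 1))
    (fun k hk => closure_star_lt (IsPGroup.of_card hcard) hk fun a _ hw => lam_mem_lpow a hw)

end LeftBrace

namespace XVRelations

open LeftBrace

variable {p : ℕ} {A : Type*} [LeftBrace A] {P Q R S : A}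

theorem P_eq (h : XVRelations p P Q R S) : P = Q⁻¹ * S⁻¹ * Q * S :=
  calc P = (S * Q)⁻¹ * (S * Q * P) := by group
    _ = Q⁻¹ * S⁻¹ * Q * S := by rw [← h.1]; group

theorem Q_eq (h : XVRelations p P Q R S) : Q = R⁻¹ * S⁻¹ * R * S := by
  obtain ⟨-, -, -, -, -, hRS, -⟩ := h
  calc Q = (S * R)⁻¹ * (S * R * Q) := by group
    _ = R⁻¹ * S⁻¹ * R * S := by rw [← hRS]; group

theorem commute_P (h : XVRelations p P Q R S) (hgen : Subgroup.closure {P, Q, R, S} = ⊤)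
    (g : A) : Commute P g := by
  obtain ⟨-, -, hPS, hPQ, hPR, -⟩ := h
  refine commute_of_closure_eq_top hgen (fun y hy => ?_) g
  rcases hy with rfl | rfl | rfl | rfl
  exacts [Commute.refl y, hPQ, hPR, hPS]

theorem exists_conj_Q (h : XVRelations p P Q R S) (hgen : Subgroup.closure {P, Q, R, S} = ⊤)
    (g : A) : ∃ m : ℤ, g * Q * g⁻¹ = Q * P ^ m := by
  have hP := h.commute_P hgen
  refine exists_conj_eq_mul_zpow_of_closure_eq_top hgen hP (fun x hx => ?_) g
  obtain ⟨hQS, hQR, -⟩ := h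
  rcases hx with rfl | rfl | rfl | rfl
  · exact ⟨0, by rw [zpow_zero, mul_one, (hP Q).eq, mul_inv_cancel_right]⟩
  · exact ⟨0, by rw [zpow_zero, mul_one, mul_inv_cancel_right]⟩
  · exact ⟨0, by rw [zpow_zero, mul_one, ← hQR, mul_inv_cancel_right]⟩
  · refine ⟨-1, ?_⟩
    calc x * Q * x⁻¹ = Q * x * P⁻¹ * x⁻¹ := by rw [hQS]; group
      _ = Q * P ^ (-1 : ℤ) := by rw [mul_assoc (Q * x), (hP x⁻¹).inv_left.eq]; group

theorem Q_mem_lpow_two (h : XVRelations p P Q R S) : Q ∈ lpow A 2 := by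
  rw [h.Q_eq]
  exact commutator_mem_lpow (star_mem_lpow R (AddSubgroup.mem_top S))
    (star_mem_lpow S (AddSubgroup.mem_top R))

theorem P_mem_lpow_three (h : XVRelations p P Q R S) : P ∈ lpow A 3 := by
  have hQS : star Q S ∈ lpow A 3 := by
    rw [h.Q_eq]; exact star_commutator_mem_lpow R S (AddSubgroup.mem_top S)
  rw [h.P_eq]
  exact commutator_mem_lpow hQS (star_mem_lpow S h.Q_mem_lpow_two)

theorem star_Q_P_mem_lpow_five (h : XVRelations p P Q R S) : star Q P ∈ lpow A 5 := by
  rw [h.Q_eq]; exact star_commutator_mem_lpow R S h.P_mem_lpow_three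

end XVRelations

open LeftBrace in
theorem statement5_general (p : ℕ) (hp : p.Prime) (A : Type*) [FpBrace p A]
    (P Q R S : A) (hXV : IsXVBrace p A P Q R S) :
    ∀ a ∈ lpow A 4, ∃ α : ℕ, α < p ∧ LeftBrace.star a Q = P ^ α := by
  obtain ⟨hcard, hgen, hrel⟩ := hXV
  have : Fact p.Prime := ⟨hp⟩
  have h5 : lpow A 5 = ⊥ := lpow_succ_eq_bot hcard
  have hzero {x : A} (hx : x ∈ lpow A 5) : x = 0 := by rwa [h5, AddSubgroup.mem_bot] at hx
  have hQP : lam Q P = P := lam_eq_self_of_star_eq_zero (hzero hrel.star_Q_P_mem_lpow_five)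
  intro a ha
  have hfix (x : A) : lam x a = a := lam_eq_self_of_star_eq_zero (hzero (star_mem_lpow x ha))
  obtain ⟨m, hm⟩ := hrel.exists_conj_Q hgen a
  obtain ⟨α, hα, hPα⟩ := exists_lt_pow_eq_zpow hp.pos hrel.2.2.2.2.2.2.1 m
  refine ⟨α, hα, ?_⟩
  calc star a Q = a * Q * a⁻¹ - Q := star_eq_mul_mul_inv_sub hfix Q
    _ = lam Q (P ^ α) := by rw [hm, hPα, lam]
    _ = P ^ α := lam_pow_eq_pow (hrel.commute_P hgen Q).symm hQP α

/-- in a not right nilpotent `𝔽ₚ`-brace with multiplicative group XV,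
for every `a ∈ A⁴`, `a * Q = P^α` for some `0 ≤ α < p`. -/
theorem statement5 (p : ℕ) (hp : p.Prime) (hp3 : 3 < p) (A : Type*) [FpBrace p A]
    (hnil : ¬ IsRightNilpotent A)
    (P Q R S : A) (hXV : IsXVBrace p A P Q R S) :
    ∀ a ∈ lpow A 4, ∃ α : ℕ, α < p ∧ LeftBrace.star a Q = P ^ α :=
  statement5_general p hp A P Q R S hXV
end

section
/- Let p > 3 be a prime. Let A be an 𝔽_p-brace whose additive group is a 4-dimensional 𝔽_p-vector space with basis P, Q, R, S, and suppose P, Q, R, S satisfy the Multiplicative Table with parameters y, i, k ∈ 𝔽_p, y ≠ 0. Then P, Q, R, S satisfy the relations Q∘S = S∘Q∘P, Q∘R = R∘Q, P∘S = S∘P, P∘Q = Q∘P, P∘R = R∘P, R∘S = S∘R∘Q, and P^p = Q^p = R^p = S^p = 0 (powers with respect to ∘), and P, Q, R, S generate the group (A,∘), which has p^4 elements; hence (A,∘) is the group XV. -/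
/-!
In the notation of the paper (`∘` is the group law, written `*` in Lean, and `a * b` is
`star a b`), `a ∘ b = a + b + a * b`, the map `b ↦ a * b` is `𝔽_p`-linear and
`(a ∘ b) * c = a * c + b * c + a * (b * c)`; the six commutation relations are direct
computations with the table. If `a * (a * (a * a)) = 0`, induction on `n` gives
`a^n = n a + C(n,2) (a * a) + C(n,3) (a * (a * a))`, which vanishes at `n = p > 3`.

For generation let `H = ⟨P, Q, R, S⟩`. If `V ⊆ H` is an additive subgroup with `λ_h V ⊆ V` for
all `h ∈ H`, then `H + V ⊆ H`, because `h + v = h ∘ λ_{h⁻¹} v`. In the flag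
`⟨S⟩ ⊂ ⟨P, S⟩ ⊂ ⟨Q, P, S⟩ ⊂ A` each term is `λ_H`-stable (it suffices to check generators, `H`
being finite), and the next basis vector `a` satisfies `a^α ≡ α a` modulo the previous term; so
inductively every term of the flag lies in `H`.
-/

namespace LeftBrace

section Basic

variable {A : Type*} [LeftBrace A]

theorem zero_eq_one : (0 : A) = 1 := by
  simpa using (mul_add_eq (1 : A) 0 0).symm

theorem mul_add' (a b c : A) : a * (b + c) = a * b + a * c - a :=
  eq_sub_of_add_eq (mul_add_eq a b c)

theorem mul_eq_add_add_star (a b : A) : a * b = a + b + star a b := by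
  rw [star]; abel

theorem star_add_right (a b c : A) : star a (b + c) = star a b + star a c := by
  simp only [star, mul_add']; abel

def starAddHom (a : A) : A →+ A := AddMonoidHom.mk' (star a) (star_add_right a)

theorem star_zero_right (a : A) : star a 0 = 0 := map_zero (starAddHom a)

theorem star_neg_right (a b : A) : star a (-b) = -star a b := map_neg (starAddHom a) b

theorem star_nsmul_right (a b : A) (n : ℕ) : star a (n • b) = n • star a b :=
  map_nsmul (starAddHom a) n b

theorem star_one_left (b : A) : star 1 b = 0 := by
  rw [star, one_mul, ← zero_eq_one]; abel

theorem star_mul_left (a b c : A) :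
    star (a * b) c = star a c + star b c + star a (star b c) := by
  rw [star, mul_assoc, mul_eq_add_add_star b c, mul_add', mul_add', star.eq_1 a c,
    star.eq_1 a (star b c)]
  abel

theorem mul_mul_eq_add_star (a b c : A) :
    a * b * c = a + b + c + star a b + star a c + star b c + star a (star b c) := by
  rw [mul_eq_add_add_star (a * b), star_mul_left, mul_eq_add_add_star a b]; abel

theorem mul_comm_of_star_eq {a b : A} (h : star a b = star b a) : a * b = b * a := by
  rw [mul_eq_add_add_star, mul_eq_add_add_star b, h]; abel

-- `b + star a⁻¹ b = λ_{a⁻¹} b` and `a ∘ λ_{a⁻¹} b = a + λ_a λ_{a⁻¹} b = a + b`.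
theorem add_eq_mul_add_star_inv (a b : A) : a + b = a * (b + star a⁻¹ b) := by
  have h := star_mul_left a a⁻¹ b
  rw [mul_inv_cancel, star_one_left] at h
  rw [mul_eq_add_add_star, star_add_right, ← add_zero (a + b), h]
  abel

theorem pow_eq_nsmul_add_choose_nsmul {a : A} (h : star a (star a (star a a)) = 0) (n : ℕ) :
    a ^ n = n • a + n.choose 2 • star a a + n.choose 3 • star a (star a a) := by
  induction n with
  | zero => simp [zero_eq_one]
  | succ n ih =>
    rw [pow_succ', mul_eq_add_add_star, ih, star_add_right, star_add_right, star_nsmul_right,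
      star_nsmul_right, star_nsmul_right, h, Nat.choose_succ_succ' n 1,
      Nat.choose_succ_succ' n 2, Nat.choose_one_right]
    simp only [add_nsmul, one_nsmul, nsmul_zero]
    abel

theorem star_mem_of_mem_closure [Finite A] {S : Type*} [SetLike S A] [AddSubmonoidClass S A]
    {T : Set A} {V : S} (hT : ∀ g ∈ T, ∀ v ∈ V, star g v ∈ V) {a : A}
    (ha : a ∈ Subgroup.closure T) : ∀ v ∈ V, star a v ∈ V := by
  rw [← Subgroup.mem_toSubmonoid, Subgroup.closure_toSubmonoid_of_finite] at ha
  induction ha using Submonoid.closure_induction with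
  | mem g hg => exact hT g hg
  | one => intro v _; rw [star_one_left]; exact zero_mem V
  | mul a b _ _ iha ihb =>
    intro v hv
    rw [star_mul_left]
    exact add_mem (add_mem (iha v hv) (ihb v hv)) (iha _ (ihb v hv))

theorem span_insert_subset {R : Type*} [Ring R] [Module R A] {H : Subgroup A} {s : Set A}
    {x : A} (hs : (Submodule.span R s : Set A) ⊆ H)
    (hinv : ∀ h ∈ H, ∀ v ∈ Submodule.span R s, star h v ∈ Submodule.span R s)
    (hx : ∀ α : R, ∃ h ∈ H, h - α • x ∈ Submodule.span R s) :
    (Submodule.span R (insert x s) : Set A) ⊆ H := by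
  intro v hv
  obtain ⟨α, w, hw, rfl⟩ := Submodule.mem_span_insert.1 (SetLike.mem_coe.1 hv)
  obtain ⟨h, hH, hh⟩ := hx α
  have hu : w - (h - α • x) ∈ Submodule.span R s := sub_mem hw hh
  rw [show α • x + w = h + (w - (h - α • x)) by abel, add_eq_mul_add_star_inv]
  exact H.mul_mem hH (hs (add_mem hu (hinv _ (H.inv_mem hH) _ hu)))

end Basic

section FpBrace

variable {p : ℕ} {A : Type*} [FpBrace p A]

theorem star_smul_right (α : ZMod p) (a b : A) : star a (α • b) = α • star a b :=
  FpBrace.star_smul' α a b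

theorem star_mem_span_of_forall {s : Set A} {a : A}
    (h : ∀ t ∈ s, star a t ∈ Submodule.span (ZMod p) s) :
    ∀ v ∈ Submodule.span (ZMod p) s, star a v ∈ Submodule.span (ZMod p) s := by
  intro v hv
  induction hv using Submodule.span_induction with
  | mem t ht => exact h t ht
  | zero => rw [star_zero_right]; exact zero_mem _
  | add u w _ _ hu hw => rw [star_add_right]; exact add_mem hu hw
  | smul α u _ hu => rw [star_smul_right]; exact Submodule.smul_mem _ α hu

theorem pow_prime_eq_one (hp : p.Prime) (hp3 : 3 < p) {a : A}
    (h : star a (star a (star a a)) = 0) : a ^ p = 1 := by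
  have hdvd : ∀ {n : ℕ} (x : A), p ∣ n → n • x = 0 := by
    rintro n x ⟨m, rfl⟩
    rw [mul_nsmul, ZModModule.char_nsmul_eq_zero p x, nsmul_zero]
  rw [pow_eq_nsmul_add_choose_nsmul h, hdvd a dvd_rfl,
    hdvd _ (hp.dvd_choose_self two_ne_zero (by omega)),
    hdvd _ (hp.dvd_choose_self three_ne_zero hp3), ← zero_eq_one]
  simp

theorem pow_val_sub_smul_mem [NeZero p] {a : A} {V : Submodule (ZMod p) A}
    (h : star a (star a (star a a)) = 0) (h1 : star a a ∈ V) (h2 : star a (star a a) ∈ V)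
    (α : ZMod p) : a ^ α.val - α • a ∈ V := by
  rw [pow_eq_nsmul_add_choose_nsmul h, ← Nat.cast_smul_eq_nsmul (ZMod p) α.val a,
    ZMod.natCast_zmod_val, add_sub_right_comm, add_sub_right_comm, sub_self, zero_add]
  exact add_mem (nsmul_mem h1 _) (nsmul_mem h2 _)

theorem span_insert_subset_closure [NeZero p] [Finite A] {T s : Set A} {a : A} (ha : a ∈ T)
    (hs : (Submodule.span (ZMod p) s : Set A) ⊆ Subgroup.closure T)
    (hinv : ∀ g ∈ T, ∀ t ∈ s, star g t ∈ Submodule.span (ZMod p) s)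
    (h0 : star a (star a (star a a)) = 0) (h1 : star a a ∈ Submodule.span (ZMod p) s)
    (h2 : star a (star a a) ∈ Submodule.span (ZMod p) s) :
    (Submodule.span (ZMod p) (insert a s) : Set A) ⊆ Subgroup.closure T :=
  span_insert_subset hs
    (fun _ hh => star_mem_of_mem_closure (fun g hg => star_mem_span_of_forall (hinv g hg)) hh)
    fun α =>
      ⟨a ^ α.val, pow_mem (Subgroup.subset_closure ha) _, pow_val_sub_smul_mem h0 h1 h2 α⟩

end FpBrace

end LeftBrace

namespace MultTable

open LeftBrace

variable {p : ℕ} {A : Type*} [FpBrace p A] {P Q R S : A} {y i k : ZMod p}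

theorem xvRelations (hp : p.Prime) (hp3 : 3 < p) (h : MultTable P Q R S y i k) :
    XVRelations p P Q R S := by
  obtain ⟨hPP, hPQ, hPR, hPS, hQP, hQQ, hQR, hQS, hRP, hRQ, hRR, hRS, hSP, hSQ, hSR, hSS⟩ := h
  refine ⟨?_, mul_comm_of_star_eq (hQR.trans hRQ.symm), mul_comm_of_star_eq (hPS.trans hSP.symm),
    mul_comm_of_star_eq (hPQ.trans hQP.symm), mul_comm_of_star_eq (hPR.trans hRP.symm), ?_,
    pow_prime_eq_one hp hp3 ?_, pow_prime_eq_one hp hp3 ?_, pow_prime_eq_one hp hp3 ?_,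
    pow_prime_eq_one hp hp3 ?_⟩
  · rw [mul_eq_add_add_star, mul_mul_eq_add_star, hQS, hSQ, hSP, hQP, star_zero_right]
    abel
  · rw [mul_eq_add_add_star, mul_mul_eq_add_star, hRS, hSR, hSQ, hRQ, star_smul_right, hSS,
      smul_zero]
    abel
  all_goals simp only [hPP, hQQ, hQS, hRR, hRP, hRS, hSS, star_zero_right, star_neg_right,
    star_add_right, star_smul_right, smul_zero, neg_zero, add_zero]

theorem closure_eq_top [NeZero p] [Finite A] (h : MultTable P Q R S y i k)
    (hspan : Submodule.span (ZMod p) {P, Q, R, S} = ⊤) :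
    Subgroup.closure {P, Q, R, S} = ⊤ := by
  obtain ⟨hPP, hPQ, hPR, hPS, hQP, hQQ, hQR, hQS, hRP, hRQ, hRR, hRS, hSP, hSQ, hSR, hSS⟩ := h
  have hS_sub := span_insert_subset_closure (p := p) (T := {P, Q, R, S}) (s := ∅) (a := S)
    (by simp) (by simp [zero_eq_one]) ?_ ?_ ?_ ?_
  have hPS_sub := span_insert_subset_closure (a := P) (by simp) hS_sub ?_ ?_ ?_ ?_
  have hQPS_sub := span_insert_subset_closure (a := Q) (by simp) hPS_sub ?_ ?_ ?_ ?_
  have hRQPS_sub := span_insert_subset_closure (a := R) (by simp) hQPS_sub ?_ ?_ ?_ ?_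
  · rw [show insert R (insert Q (insert P (insert S ∅))) = ({P, Q, R, S} : Set A) by grind,
      hspan] at hRQPS_sub
    exact eq_top_iff.2 fun v _ => hRQPS_sub trivial
  all_goals
    aesop (add norm simp [star_zero_right, star_neg_right, star_add_right, star_smul_right],
      safe apply [add_mem, sub_mem, Submodule.smul_mem, Submodule.subset_span, neg_mem])

end MultTable

theorem statement13_general (p : ℕ) (hp : p.Prime) (hp3 : 3 < p) (A : Type*) [FpBrace p A]
    (P Q R S : A) (B : Module.Basis (Fin 4) (ZMod p) A)
    (hB : B 0 = P ∧ B 1 = Q ∧ B 2 = R ∧ B 3 = S)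
    (y i k : ZMod p) (htable : MultTable P Q R S y i k) :
    XVRelations p P Q R S ∧ Subgroup.closure {P, Q, R, S} = ⊤ ∧
    Nat.card A = p ^ 4 := by
  have : NeZero p := ⟨hp.ne_zero⟩
  have : Module.Finite (ZMod p) A := Module.Finite.of_basis B
  have : Finite A := Module.finite_of_finite (ZMod p)
  have hrange : Set.range B = {P, Q, R, S} := by
    obtain ⟨rfl, rfl, rfl, rfl⟩ := hB
    ext; simp [Fin.exists_fin_succ, eq_comm]
  refine ⟨htable.xvRelations hp hp3, htable.closure_eq_top (hrange ▸ B.span_eq), ?_⟩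
  rw [Nat.card_congr B.equivFun.toEquiv, Nat.card_fun, Nat.card_zmod, Nat.card_fin]

/-- an `𝔽ₚ`-brace with basis `P, Q, R, S` satisfying the Multiplicative
Table has multiplicative group XV, generated by `P, Q, R, S`. -/
theorem statement13 (p : ℕ) (hp : p.Prime) (hp3 : 3 < p) (A : Type*) [FpBrace p A]
    (P Q R S : A) (B : Module.Basis (Fin 4) (ZMod p) A)
    (hB : B 0 = P ∧ B 1 = Q ∧ B 2 = R ∧ B 3 = S)
    (y i k : ZMod p) (hy : y ≠ 0) (htable : MultTable P Q R S y i k) :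
    XVRelations p P Q R S ∧ Subgroup.closure {P, Q, R, S} = ⊤ ∧
    Nat.card A = p ^ 4 :=
  statement13_general p hp hp3 A P Q R S B hB y i k htable
end
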